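/- Given δ > 0 there exists ε > 0 such that: for every n and all digraph subalgebras (A₁, C₁) and (A₂, C₂) of (M_n(ℂ), D_n), if A₁ ⊆_ε A₂, then N_{C₁}(A₁) ⊆_δ N_{C₂}(A₂); that is, for every v ∈ N_{C₁}(A₁) there exists w ∈ N_{C₂}(A₂) with ‖v − w‖ < δ. -/

import Mathlib

open scoped Matrix.Norms.L2Operator
open Matrix

/-- A digraph subalgebra of `(Mₙ(ℂ), Dₙ)`: a matrix unit system
`{v_{kl} : (k,l) ∈ S} ⊆ Mₙ(ℂ)` indexed by a reflexive transitive relation `S`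
on `{1,…,m}`, each `v_{kl}` a `Dₙ`-normalising partial isometry, with the usual
matrix unit relations, whose diagonal units are mutually orthogonal projections
in the diagonal masa `Dₙ`. -/
structure DigraphSubalgebra (n m : ℕ) where
  /-- the underlying reflexive transitive relation (digraph) on `{1,…,m}` -/
  S : Fin m → Fin m → Prop
  refl : ∀ k, S k k
  trans : ∀ k l j, S k l → S l j → S k j
  /-- the matrix units `v_{kl}` (only those with `(k,l) ∈ S` are relevant) -/
  u : Fin m → Fin m → Matrix (Fin n) (Fin n) ℂ
  partial_isometry : ∀ k l, S k l →
    ((u k l)ᴴ * u k l) * ((u k l)ᴴ * u k l) = (u k l)ᴴ * u k l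
  normalises_left : ∀ k l, S k l → ∀ c : Matrix (Fin n) (Fin n) ℂ, c.IsDiag →
    (u k l * c * (u k l)ᴴ).IsDiag
  normalises_right : ∀ k l, S k l → ∀ c : Matrix (Fin n) (Fin n) ℂ, c.IsDiag →
    ((u k l)ᴴ * c * u k l).IsDiag
  star_eq : ∀ k l, S k l → S l k → (u k l)ᴴ = u l k
  conj_left : ∀ k l, S k l → (u k l)ᴴ * u k l = u l l
  conj_right : ∀ k l, S k l → u k l * (u k l)ᴴ = u k k
  mul_eq : ∀ k l l'', S k l → S l l'' → u k l * u l l'' = u k l''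
  mul_eq_zero : ∀ k l l' l'', S k l → S l' l'' → l ≠ l' → u k l * u l' l'' = 0
  diag_isDiag : ∀ k, (u k k).IsDiag
  diag_proj : ∀ k, u k k * u k k = u k k ∧ (u k k)ᴴ = u k k
  diag_ortho : ∀ k l, k ≠ l → u k k * u l l = 0

namespace DigraphSubalgebra

variable {n m : ℕ}

/-- The digraph algebra `A' = span{v_{kl} : (k,l) ∈ S}`. -/
def A (D : DigraphSubalgebra n m) : Set (Matrix (Fin n) (Fin n) ℂ) :=
  (Submodule.span ℂ {x | ∃ k l, D.S k l ∧ x = D.u k l} : Submodule ℂ _)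

/-- The masa `C' = span{v_{11},…,v_{mm}} ⊆ Dₙ`. -/
def C (D : DigraphSubalgebra n m) : Set (Matrix (Fin n) (Fin n) ℂ) :=
  (Submodule.span ℂ (Set.range fun k => D.u k k) : Submodule ℂ _)

/-- The normaliser `N_{C'}(A')`: partial isometries `w ∈ A'` with
`w c w* ∈ C'` and `w* c w ∈ C'` for all `c ∈ C'`. -/
def N (D : DigraphSubalgebra n m) : Set (Matrix (Fin n) (Fin n) ℂ) :=
  {w | w ∈ D.A ∧ (wᴴ * w) * (wᴴ * w) = wᴴ * w ∧
    ∀ c ∈ D.C, w * c * wᴴ ∈ D.C ∧ wᴴ * c * w ∈ D.C}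

end DigraphSubalgebra

/-!
Write `u_{kl}` for the matrix units. Each `u_{kl}` has at most one nonzero entry in every row and
column, these entries have modulus one, and distinct units have disjoint supports. An element
`v` of the normaliser `N_C(A)` inherits this shape: normalising the diagonal projections `u_{kk}`
forbids two nonzero blocks `u_{kk} v u_{ll}`, `u_{kk} v u_{ll'}` in one block row (and likewise in
one block column), and `v*v` being a projection makes the entries unimodular. Hence `‖v‖ ≤ 1`,
and `v` has an approximant `b = ∑ d_{kl} u_{kl}` in `A₂` that is entrywise `ε`-close to `v`. The
blocks of `A₂` meeting the support of `v` then form a partial bijection `k ↦ l` with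
`|d_{kl}| ≈ 1`, so `w = ∑ (d_{kl} / |d_{kl}|) u_{kl}` over them lies in `N_{C₂}(A₂)` and is
entrywise `2ε`-close to `v`, with support inside that of `v`. For this sparsity pattern the
operator norm is at most the largest modulus of an entry, so `‖v - w‖ ≤ 2ε`.
-/

namespace Set.Subsingleton

variable {ι E : Type*} [Fintype ι]

lemma sum_eq_of_ne_zero [AddCommMonoid E] {f : ι → E} (hf : (Function.support f).Subsingleton)
    {i₀ : ι} (hi₀ : f i₀ ≠ 0) : ∑ i, f i = f i₀ :=
  Finset.sum_eq_single i₀ (fun _ _ hi => by_contra fun h => hi (hf h hi₀)) (by simp)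

lemma norm_sum_sq_eq [NormedAddCommGroup E] {f : ι → E}
    (hf : (Function.support f).Subsingleton) : ‖∑ i, f i‖ ^ 2 = ∑ i, ‖f i‖ ^ 2 := by
  by_cases h : ∃ i₀, f i₀ ≠ 0
  · obtain ⟨i₀, hi₀⟩ := h
    have hnorm : (Function.support fun i => ‖f i‖ ^ 2).Subsingleton :=
      hf.anti fun i hi => by simpa using hi
    rw [hf.sum_eq_of_ne_zero hi₀, hnorm.sum_eq_of_ne_zero (i₀ := i₀) (by simpa using hi₀)]
  · push Not at h
    simp [h]

lemma norm_sum_le [NormedAddCommGroup E] {f : ι → E} (hf : (Function.support f).Subsingleton)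
    {C : ℝ} (hC : 0 ≤ C) (hfC : ∀ i, ‖f i‖ ≤ C) : ‖∑ i, f i‖ ≤ C := by
  by_cases h : ∃ i₀, f i₀ ≠ 0
  · obtain ⟨i₀, hi₀⟩ := h
    rw [hf.sum_eq_of_ne_zero hi₀]
    exact hfC i₀
  · push Not at h
    simpa [h] using hC

end Set.Subsingleton

namespace Matrix

variable {m n α 𝕜 : Type*}

lemma isDiag_single [Zero α] [DecidableEq n] (i : n) (c : α) : (single i i c).IsDiag := by
  intro a b hab
  simp only [single_apply, ite_eq_right_iff, and_imp]
  rintro rfl rfl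
  exact absurd rfl hab

section Diag

variable [Fintype n] [NonUnitalNonAssocSemiring α] {A : Matrix n n α}

lemma IsDiag.mul_apply_left (hA : A.IsDiag) (B : Matrix n m α) (i : n) (j : m) :
    (A * B) i j = A i i * B i j := by
  rw [mul_apply]
  exact Finset.sum_eq_single i (fun _ _ ha => by rw [hA (Ne.symm ha), zero_mul]) (by simp)

lemma IsDiag.mul_apply_right (hA : A.IsDiag) (B : Matrix m n α) (i : m) (j : n) :
    (B * A) i j = B i j * A j j := by
  rw [mul_apply]
  exact Finset.sum_eq_single j (fun _ _ ha => by rw [hA ha, mul_zero]) (by simp)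

lemma IsDiag.isIdempotentElem_apply (hA : A.IsDiag) (h : IsIdempotentElem A) (i : n) :
    IsIdempotentElem (A i i) := by
  rw [IsIdempotentElem, ← hA.mul_apply_left, h.eq]

lemma IsDiag.commute [DecidableEq n] {α : Type*} [NonUnitalNonAssocCommSemiring α]
    {A B : Matrix n n α} (hA : A.IsDiag) (hB : B.IsDiag) : Commute A B := by
  rw [← hA.diagonal_diag, ← hB.diagonal_diag]
  exact commute_diagonal _ _

end Diag

structure IsPartialMonomial [Zero α] (M : Matrix m n α) : Prop where
  row : ∀ i, (Function.support (M i)).Subsingleton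
  col : ∀ j, (Function.support fun i => M i j).Subsingleton

namespace IsPartialMonomial

lemma mono [Zero α] {M N : Matrix m n α} (hM : M.IsPartialMonomial)
    (hNM : ∀ i j, N i j ≠ 0 → M i j ≠ 0) : N.IsPartialMonomial :=
  ⟨fun i _ hj _ hj' => hM.row i (hNM i _ hj) (hNM i _ hj'),
    fun j _ hi _ hi' => hM.col j (hNM _ j hi) (hNM _ j hi')⟩

lemma smul [Zero α] [SMulZeroClass 𝕜 α] {M : Matrix m n α} (hM : M.IsPartialMonomial) (c : 𝕜) :
    (c • M).IsPartialMonomial :=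
  hM.mono fun _ _ h => right_ne_zero_of_smul h

variable [NonUnitalNonAssocSemiring α] [StarRing α] {V : Matrix m n α}

lemma conjTranspose_mul_apply {o : Type*} [Fintype m] (hV : V.IsPartialMonomial) {i : m} {j : n}
    (h : V i j ≠ 0) (W : Matrix m o α) (j' : o) : (Vᴴ * W) j j' = star (V i j) * W i j' := by
  rw [mul_apply]
  refine Finset.sum_eq_single i (fun a _ ha => ?_) (by simp)
  rw [conjTranspose_apply, show V a j = 0 from by_contra fun h' => ha (hV.col j h' h),
    star_zero, zero_mul]

lemma mul_conjTranspose_apply {o : Type*} [Fintype n] (hV : V.IsPartialMonomial) {i : m}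
    {j : n} (h : V i j ≠ 0) (W : Matrix o n α) (i' : o) :
    (W * Vᴴ) i' i = W i' j * star (V i j) := by
  rw [mul_apply]
  refine Finset.sum_eq_single j (fun a _ ha => ?_) (by simp)
  rw [conjTranspose_apply, show V i a = 0 from by_contra fun h' => ha (hV.row i h' h),
    star_zero, mul_zero]

lemma isDiag_conjTranspose_mul_self [Fintype m] (hV : V.IsPartialMonomial) : (Vᴴ * V).IsDiag := by
  intro j j' hjj'
  rw [mul_apply]
  refine Finset.sum_eq_zero fun a _ => ?_
  by_cases h : V a j = 0
  · rw [conjTranspose_apply, h, star_zero, zero_mul]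
  · rw [show V a j' = 0 from by_contra fun h' => hjj' (hV.row a h h'), mul_zero]

end IsPartialMonomial

lemma isPartialMonomial_of_isDiag [Fintype m] [DecidableEq m] [Fintype n] [DecidableEq n]
    [Semiring α] [StarRing α] [NoZeroDivisors α] {V : Matrix m n α}
    (hrow : ∀ i : m, (Vᴴ * single i i (1 : α) * V).IsDiag)
    (hcol : ∀ j : n, (V * single j j (1 : α) * Vᴴ).IsDiag) :
    V.IsPartialMonomial where
  row i j hj j' hj' := by_contra fun hjj' => mul_ne_zero (star_ne_zero.mpr hj) hj' <| by
    simpa [mul_apply, single_apply, ite_and, Finset.sum_ite_eq'] using hrow i hjj'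
  col j i hi i' hi' := by_contra fun hii' => mul_ne_zero hi (star_ne_zero.mpr hi') <| by
    simpa [mul_apply, single_apply, ite_and, Finset.sum_ite_eq'] using hcol j hii'

variable [Fintype m] [Fintype n] [RCLike 𝕜]

lemma IsPartialMonomial.norm_apply_eq_one {V : Matrix m n 𝕜} (hV : V.IsPartialMonomial)
    (hVV : IsIdempotentElem (Vᴴ * V)) {i : m} {j : n} (h : V i j ≠ 0) : ‖V i j‖ = 1 := by
  have hjj := hV.isDiag_conjTranspose_mul_self.isIdempotentElem_apply hVV j
  rw [hV.conjTranspose_mul_apply h, RCLike.star_def, RCLike.conj_mul] at hjj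
  obtain h0 | h1 := IsIdempotentElem.iff_eq_zero_or_one.mp hjj
  · exact absurd (by exact_mod_cast h0) (pow_ne_zero 2 (norm_ne_zero_iff.mpr h))
  · exact (pow_eq_one_iff_of_nonneg (norm_nonneg _) two_ne_zero).mp (by exact_mod_cast h1)

variable [DecidableEq n]

lemma IsPartialMonomial.l2_opNorm_le {M : Matrix m n 𝕜} (hM : M.IsPartialMonomial) {C : ℝ}
    (hC : 0 ≤ C) (hMC : ∀ i j, ‖M i j‖ ≤ C) : ‖M‖ ≤ C := by
  refine ContinuousLinearMap.opNorm_le_bound _ hC fun x => ?_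
  refine (sq_le_sq₀ (by positivity) (by positivity)).mp ?_
  have hrow : ∀ i, (Function.support fun j => M i j * x j).Subsingleton := fun i =>
    (hM.row i).anti (Function.support_mul_subset_left _ _)
  have hcol : ∀ j, ∑ i, ‖M i j‖ ^ 2 ≤ C ^ 2 := fun j => by
    rw [← (hM.col j).norm_sum_sq_eq]
    exact pow_le_pow_left₀ (norm_nonneg _) ((hM.col j).norm_sum_le hC fun i => hMC i j) 2
  calc ‖(toEuclideanLin.trans LinearMap.toContinuousLinearMap) M x‖ ^ 2
      = ∑ i, ‖∑ j, M i j * x j‖ ^ 2 := by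
        simp [EuclideanSpace.norm_sq_eq, toLpLin_apply, mulVec, dotProduct]
    _ = ∑ j, (∑ i, ‖M i j‖ ^ 2) * ‖x j‖ ^ 2 := by
        simp_rw [fun i => (hrow i).norm_sum_sq_eq, Finset.sum_mul, norm_mul, mul_pow]
        exact Finset.sum_comm
    _ ≤ ∑ j, C ^ 2 * ‖x j‖ ^ 2 := by gcongr with j; exact hcol j
    _ = (C * ‖x‖) ^ 2 := by rw [mul_pow, EuclideanSpace.norm_sq_eq, Finset.mul_sum]

lemma norm_apply_le_l2_opNorm (M : Matrix m n 𝕜) (i : m) (j : n) : ‖M i j‖ ≤ ‖M‖ := by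
  have h := M.l2_opNorm_mulVec (EuclideanSpace.single j 1)
  rw [PiLp.norm_single, norm_one, mul_one] at h
  refine le_trans ?_ h
  simpa using
    PiLp.norm_apply_le ((EuclideanSpace.equiv m 𝕜).symm (M *ᵥ EuclideanSpace.single j 1)) i

end Matrix

lemma norm_sub_inv_norm_smul_self {𝕜 E : Type*} [RCLike 𝕜] [NormedAddCommGroup E]
    [NormedSpace 𝕜 E] {x : E} (hx : x ≠ 0) : ‖x - (‖x‖⁻¹ : 𝕜) • x‖ = |‖x‖ - 1| := by
  have hx' : 0 < ‖x‖ := norm_pos_iff.mpr hx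
  calc ‖x - (‖x‖⁻¹ : 𝕜) • x‖ = ‖((1 - ‖x‖⁻¹ : ℝ) : 𝕜) • x‖ := by
        rw [RCLike.ofReal_sub, RCLike.ofReal_one, sub_smul, one_smul, RCLike.ofReal_inv]
    _ = |(1 - ‖x‖⁻¹) * ‖x‖| := by rw [norm_smul, RCLike.norm_ofReal, abs_mul, abs_of_pos hx']
    _ = |‖x‖ - 1| := by rw [sub_mul, one_mul, inv_mul_cancel₀ hx'.ne']

namespace DigraphSubalgebra

variable {n m : ℕ} (D : DigraphSubalgebra n m)
  {x v : Matrix (Fin n) (Fin n) ℂ} {G : Finset (Fin m × Fin m)}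

lemma orthogonalIdempotents : OrthogonalIdempotents fun k => D.u k k :=
  ⟨fun k => (D.diag_proj k).1, fun k l hkl => D.diag_ortho k l hkl⟩

lemma isPartialMonomial_u (hS : D.S k l) : (D.u k l).IsPartialMonomial :=
  isPartialMonomial_of_isDiag (fun i => D.normalises_right k l hS _ (isDiag_single i 1))
    (fun j => D.normalises_left k l hS _ (isDiag_single j 1))

lemma norm_u_apply (hS : D.S k l) (h : D.u k l i j ≠ 0) : ‖D.u k l i j‖ = 1 :=
  (D.isPartialMonomial_u hS).norm_apply_eq_one (D.partial_isometry k l hS) h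

lemma u_self_apply_eq_one (h : D.u k k i i ≠ 0) : D.u k k i i = 1 :=
  (IsIdempotentElem.iff_eq_zero_or_one.mp
    ((D.diag_isDiag k).isIdempotentElem_apply (D.diag_proj k).1 i)).resolve_left h

lemma eq_of_u_self_apply_ne_zero {k' : Fin m} (h : D.u k k i i ≠ 0)
    (h' : D.u k' k' i i ≠ 0) : k = k' :=
  by_contra fun hkk' => mul_ne_zero h h' <| by
    rw [← (D.diag_isDiag k).mul_apply_left, D.diag_ortho k k' hkk', Matrix.zero_apply]

lemma u_self_apply_ne_zero_left (hS : D.S k l) (h : D.u k l i j ≠ 0) : D.u k k i i ≠ 0 := by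
  rw [← D.mul_eq k k l (D.refl k) hS, (D.diag_isDiag k).mul_apply_left] at h
  exact left_ne_zero_of_mul h

lemma u_self_apply_ne_zero_right (hS : D.S k l) (h : D.u k l i j ≠ 0) : D.u l l j j ≠ 0 := by
  rw [← D.mul_eq k l l hS (D.refl l), (D.diag_isDiag l).mul_apply_right] at h
  exact right_ne_zero_of_mul h

lemma exists_u_apply_ne_zero_of_left (hS : D.S k l) (h : D.u k k i i ≠ 0) :
    ∃ j, D.u k l i j ≠ 0 := by
  by_contra! hrow
  rw [← D.conj_right k l hS, mul_apply] at h
  exact h (Finset.sum_eq_zero fun j _ => by rw [hrow j, zero_mul])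

lemma exists_u_apply_ne_zero_of_right (hS : D.S k l) (h : D.u l l j j ≠ 0) :
    ∃ i, D.u k l i j ≠ 0 := by
  by_contra! hcol
  rw [← D.conj_left k l hS, mul_apply] at h
  exact h (Finset.sum_eq_zero fun i _ => by rw [hcol i, mul_zero])

lemma eq_of_u_apply_ne_zero (hS : D.S k l) {k' l' : Fin m} (hS' : D.S k' l')
    (h : D.u k l i j ≠ 0) (h' : D.u k' l' i j ≠ 0) : k = k' ∧ l = l' :=
  ⟨D.eq_of_u_self_apply_ne_zero (D.u_self_apply_ne_zero_left hS h)
      (D.u_self_apply_ne_zero_left hS' h'),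
    D.eq_of_u_self_apply_ne_zero (D.u_self_apply_ne_zero_right hS h)
      (D.u_self_apply_ne_zero_right hS' h')⟩

lemma u_self_mul_mul_u_self_apply (hS : D.S k l) (h : D.u k l i j ≠ 0)
    (x : Matrix (Fin n) (Fin n) ℂ) : (D.u k k * x * D.u l l) i j = x i j := by
  rw [(D.diag_isDiag l).mul_apply_right, (D.diag_isDiag k).mul_apply_left,
    D.u_self_apply_eq_one (D.u_self_apply_ne_zero_left hS h),
    D.u_self_apply_eq_one (D.u_self_apply_ne_zero_right hS h), one_mul, mul_one]

lemma apply_eq_mul_u_apply (hS : D.S k l) {c : ℂ}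
    (hc : D.u k k * x * D.u l l = c • D.u k l) (h : D.u k l i j ≠ 0) :
    x i j = c * D.u k l i j := by
  rw [← D.u_self_mul_mul_u_self_apply hS h x, hc, Matrix.smul_apply, smul_eq_mul]

lemma norm_apply_of_eq_smul (hS : D.S k l) {c : ℂ}
    (hc : D.u k k * x * D.u l l = c • D.u k l) (h : D.u k l i j ≠ 0) : ‖x i j‖ = ‖c‖ := by
  rw [D.apply_eq_mul_u_apply hS hc h, norm_mul, D.norm_u_apply hS h, mul_one]

lemma conjTranspose_u_mul_u_of_ne (hS : D.S k l) {k' l' : Fin m} (hS' : D.S k' l') (hkk' : k ≠ k') :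
    (D.u k l)ᴴ * D.u k' l' = 0 := by
  rw [← D.mul_eq k k l (D.refl k) hS, ← D.mul_eq k' k' l' (D.refl k') hS', conjTranspose_mul,
    (D.diag_proj k).2, Matrix.mul_assoc, ← Matrix.mul_assoc (D.u k k), D.diag_ortho k k' hkk',
    Matrix.zero_mul, Matrix.mul_zero]

lemma u_mul_conjTranspose_u_of_ne (hS : D.S k l) {k' l' : Fin m} (hS' : D.S k' l') (hll' : l ≠ l') :
    D.u k l * (D.u k' l')ᴴ = 0 := by
  rw [← D.mul_eq k l l hS (D.refl l), ← D.mul_eq k' l' l' hS' (D.refl l'), conjTranspose_mul,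
    (D.diag_proj l').2, Matrix.mul_assoc, ← Matrix.mul_assoc (D.u l l), D.diag_ortho l l' hll',
    Matrix.zero_mul, Matrix.mul_zero]

lemma sum_smul_u_self_mul_u (hS : D.S k l) (c : Fin m → ℂ) :
    (∑ r, c r • D.u r r) * D.u k l = c k • D.u k l := by
  rw [Finset.sum_mul, Finset.sum_eq_single k (fun r _ hrk => ?_) (by simp), smul_mul_assoc,
    D.mul_eq k k l (D.refl k) hS]
  rw [smul_mul_assoc, D.mul_eq_zero r r k l (D.refl r) hS hrk, smul_zero]

lemma u_mul_sum_smul_u_self (hS : D.S k l) (c : Fin m → ℂ) :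
    D.u k l * ∑ r, c r • D.u r r = c l • D.u k l := by
  rw [Finset.mul_sum, Finset.sum_eq_single l (fun r _ hrl => ?_) (by simp), mul_smul_comm,
    D.mul_eq k l l hS (D.refl l)]
  rw [mul_smul_comm, D.mul_eq_zero k l r r hS (D.refl r) (Ne.symm hrl), smul_zero]

lemma u_self_mul_u_mul_u_self {p q : Fin m} (hS : D.S p q) (k l : Fin m) :
    D.u k k * D.u p q * D.u l l = if p = k ∧ q = l then D.u k l else 0 := by
  by_cases hpk : p = k
  · subst hpk
    rw [D.mul_eq p p q (D.refl p) hS]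
    by_cases hql : q = l
    · subst hql
      rw [D.mul_eq p q q hS (D.refl q), if_pos ⟨rfl, rfl⟩]
    · rw [D.mul_eq_zero p q l l hS (D.refl l) hql, if_neg fun h => hql h.2]
  · rw [D.mul_eq_zero k k p q (D.refl k) hS (Ne.symm hpk), Matrix.zero_mul,
      if_neg fun h => hpk h.1]

lemma exists_u_self_mul_mul_u_self_eq_smul (hx : x ∈ D.A) (k l : Fin m) :
    ∃ c : ℂ, D.u k k * x * D.u l l = c • D.u k l := by
  refine Submodule.span_induction ?_ ⟨0, by simp⟩ ?_ ?_ hx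
  · rintro y ⟨p, q, hS, rfl⟩
    rw [D.u_self_mul_u_mul_u_self hS]
    split_ifs
    exacts [⟨1, (one_smul ℂ _).symm⟩, ⟨0, (zero_smul ℂ _).symm⟩]
  · rintro y z - - ⟨a, ha⟩ ⟨b, hb⟩
    exact ⟨a + b, by rw [Matrix.mul_add, Matrix.add_mul, ha, hb, add_smul]⟩
  · rintro c y - ⟨a, ha⟩
    exact ⟨c * a, by rw [Matrix.mul_smul, Matrix.smul_mul, ha, smul_smul]⟩

lemma isPartialMonomial_u_self_mul_mul_u_self (hx : x ∈ D.A) (hS : D.S k l) :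
    (D.u k k * x * D.u l l).IsPartialMonomial := by
  obtain ⟨c, hc⟩ := D.exists_u_self_mul_mul_u_self_eq_smul hx k l
  rw [hc]
  exact (D.isPartialMonomial_u hS).smul c

lemma exists_u_apply_ne_zero (hx : x ∈ D.A) (h : x i j ≠ 0) :
    ∃ k l, D.S k l ∧ D.u k l i j ≠ 0 := by
  by_contra! hno
  refine h (Submodule.span_induction ?_ (Matrix.zero_apply i j) ?_ ?_ hx)
  · rintro y ⟨k, l, hS, rfl⟩
    exact hno k l hS
  · intro y z _ _ hy hz
    rw [Matrix.add_apply, hy, hz, add_zero]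
  · intro c y _ hy
    rw [Matrix.smul_apply, hy, smul_zero]

lemma isDiag_of_mem_C (hx : x ∈ D.C) : x.IsDiag :=
  Submodule.span_induction (by rintro _ ⟨k, rfl⟩; exact D.diag_isDiag k) isDiag_zero
    (fun _ _ _ _ => IsDiag.add) (fun c _ _ h => h.smul c) hx

lemma u_self_mem_C (k : Fin m) : D.u k k ∈ D.C :=
  Submodule.subset_span ⟨k, rfl⟩

lemma row_subsingleton_of_mem_N (hv : v ∈ D.N) (i : Fin n) :
    (Function.support (v i)).Subsingleton := by
  intro j hj j' hj'
  obtain ⟨k, l, hS, hu⟩ := D.exists_u_apply_ne_zero hv.1 hj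
  obtain ⟨k', l', hS', hu'⟩ := D.exists_u_apply_ne_zero hv.1 hj'
  obtain rfl : k = k' := D.eq_of_u_self_apply_ne_zero (D.u_self_apply_ne_zero_left hS hu)
    (D.u_self_apply_ne_zero_left hS' hu')
  -- For `l ≠ l'`, `u_ll (vᴴ u_kk v) u_l'l'` vanishes because `vᴴ u_kk v ∈ C` is diagonal, yet its
  -- `(j, j')` entry is `conj (v i j) * v i j'`.
  obtain rfl : l = l' := by
    by_contra hll'
    have hQ := D.isDiag_of_mem_C (hv.2.2 _ (D.u_self_mem_C k)).2
    have hzero : (D.u k k * v * D.u l l)ᴴ * (D.u k k * v * D.u l' l') = 0 := calc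
      _ = D.u l l * (vᴴ * (D.u k k * D.u k k) * v) * D.u l' l' := by
        simp only [conjTranspose_mul, (D.diag_proj k).2, (D.diag_proj l).2, Matrix.mul_assoc]
      _ = (vᴴ * D.u k k * v) * (D.u l l * D.u l' l') := by
        rw [(D.diag_proj k).1, ((D.diag_isDiag l).commute hQ).eq, Matrix.mul_assoc]
      _ = 0 := by rw [D.diag_ortho l l' hll', Matrix.mul_zero]
    have hentry := (D.isPartialMonomial_u_self_mul_mul_u_self hv.1 hS).conjTranspose_mul_apply
      (by rwa [D.u_self_mul_mul_u_self_apply hS hu]) (D.u k k * v * D.u l' l') j'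
    rw [hzero, D.u_self_mul_mul_u_self_apply hS hu, D.u_self_mul_mul_u_self_apply hS' hu',
      Matrix.zero_apply] at hentry
    exact mul_ne_zero (star_ne_zero.mpr hj) hj' hentry.symm
  exact (D.isPartialMonomial_u hS).row i hu hu'

lemma col_subsingleton_of_mem_N (hv : v ∈ D.N) (j : Fin n) :
    (Function.support fun i => v i j).Subsingleton := by
  intro i hi i' hi'
  obtain ⟨k, l, hS, hu⟩ := D.exists_u_apply_ne_zero hv.1 hi
  obtain ⟨k', l', hS', hu'⟩ := D.exists_u_apply_ne_zero hv.1 hi'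
  obtain rfl : l = l' := D.eq_of_u_self_apply_ne_zero (D.u_self_apply_ne_zero_right hS hu)
    (D.u_self_apply_ne_zero_right hS' hu')
  obtain rfl : k = k' := by
    by_contra hkk'
    have hQ := D.isDiag_of_mem_C (hv.2.2 _ (D.u_self_mem_C l)).1
    have hzero : (D.u k k * v * D.u l l) * (D.u k' k' * v * D.u l l)ᴴ = 0 := calc
      _ = D.u k k * (v * (D.u l l * D.u l l) * vᴴ) * D.u k' k' := by
        simp only [conjTranspose_mul, (D.diag_proj k').2, (D.diag_proj l).2, Matrix.mul_assoc]
      _ = (D.u k k * D.u k' k') * (v * D.u l l * vᴴ) := by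
        rw [(D.diag_proj l).1, Matrix.mul_assoc (D.u k k), ← ((D.diag_isDiag k').commute hQ).eq,
          ← Matrix.mul_assoc]
      _ = 0 := by rw [D.diag_ortho k k' hkk', Matrix.zero_mul]
    have hentry := (D.isPartialMonomial_u_self_mul_mul_u_self hv.1 hS').mul_conjTranspose_apply
      (by rwa [D.u_self_mul_mul_u_self_apply hS' hu']) (D.u k k * v * D.u l l) i
    rw [hzero, D.u_self_mul_mul_u_self_apply hS hu, D.u_self_mul_mul_u_self_apply hS' hu',
      Matrix.zero_apply] at hentry
    exact mul_ne_zero hi (star_ne_zero.mpr hi') hentry.symm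
  exact (D.isPartialMonomial_u hS).col j hu hu'

lemma isPartialMonomial_of_mem_N (hv : v ∈ D.N) : v.IsPartialMonomial :=
  ⟨D.row_subsingleton_of_mem_N hv, D.col_subsingleton_of_mem_N hv⟩

lemma norm_apply_of_mem_N (hv : v ∈ D.N) (h : v i j ≠ 0) : ‖v i j‖ = 1 :=
  (D.isPartialMonomial_of_mem_N hv).norm_apply_eq_one hv.2.1 h

lemma norm_le_one_of_mem_N (hv : v ∈ D.N) : ‖v‖ ≤ 1 :=
  (D.isPartialMonomial_of_mem_N hv).l2_opNorm_le zero_le_one fun i j => by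
    by_cases h : v i j = 0
    · simp [h]
    · exact (D.norm_apply_of_mem_N hv h).le

lemma sum_smul_u_mem_A (hGS : ∀ p ∈ G, D.S p.1 p.2) (α : Fin m × Fin m → ℂ) :
    ∑ p ∈ G, α p • D.u p.1 p.2 ∈ D.A :=
  Submodule.sum_mem _ fun p hp =>
    Submodule.smul_mem _ _ (Submodule.subset_span ⟨_, _, hGS p hp, rfl⟩)

lemma sum_smul_u_apply (hGS : ∀ p ∈ G, D.S p.1 p.2) (α : Fin m × Fin m → ℂ) {p : Fin m × Fin m}
    (hp : p ∈ G) (h : D.u p.1 p.2 i j ≠ 0) :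
    (∑ q ∈ G, α q • D.u q.1 q.2) i j = α p * D.u p.1 p.2 i j := by
  rw [Matrix.sum_apply]
  refine Finset.sum_eq_single_of_mem p hp fun q hq hqp => ?_
  rw [Matrix.smul_apply, smul_eq_mul, show D.u q.1 q.2 i j = 0 from by_contra fun h' =>
    hqp (Prod.ext_iff.mpr (D.eq_of_u_apply_ne_zero (hGS q hq) (hGS p hp) h' h)), mul_zero]

lemma conjTranspose_sum_smul_u_mul_sum_smul_u (hGS : ∀ p ∈ G, D.S p.1 p.2)
    (hG : Set.InjOn Prod.fst (G : Set (Fin m × Fin m))) (α β : Fin m × Fin m → ℂ) :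
    (∑ p ∈ G, α p • D.u p.1 p.2)ᴴ * ∑ p ∈ G, β p • D.u p.1 p.2 =
      ∑ p ∈ G, (star (α p) * β p) • D.u p.2 p.2 := by
  rw [conjTranspose_sum, Finset.sum_mul_sum]
  refine Finset.sum_congr rfl fun p hp => ?_
  rw [Finset.sum_eq_single_of_mem p hp fun q hq hqp => ?_, conjTranspose_smul, smul_mul_smul_comm,
    D.conj_left _ _ (hGS p hp)]
  rw [conjTranspose_smul, smul_mul_smul_comm, D.conjTranspose_u_mul_u_of_ne (hGS p hp) (hGS q hq)
    fun h => hqp (hG hq hp h.symm), smul_zero]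

lemma sum_smul_u_mul_conjTranspose_sum_smul_u (hGS : ∀ p ∈ G, D.S p.1 p.2)
    (hG : Set.InjOn Prod.snd (G : Set (Fin m × Fin m))) (α β : Fin m × Fin m → ℂ) :
    (∑ p ∈ G, α p • D.u p.1 p.2) * (∑ p ∈ G, β p • D.u p.1 p.2)ᴴ =
      ∑ p ∈ G, (α p * star (β p)) • D.u p.1 p.1 := by
  rw [conjTranspose_sum, Finset.sum_mul_sum]
  refine Finset.sum_congr rfl fun p hp => ?_
  rw [Finset.sum_eq_single_of_mem p hp fun q hq hqp => ?_, conjTranspose_smul, smul_mul_smul_comm,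
    D.conj_right _ _ (hGS p hp)]
  rw [conjTranspose_smul, smul_mul_smul_comm, D.u_mul_conjTranspose_u_of_ne (hGS p hp) (hGS q hq)
    fun h => hqp (hG hq hp h.symm), smul_zero]

lemma sum_smul_u_self_mem_C (f : Fin m × Fin m → Fin m) (α : Fin m × Fin m → ℂ) :
    ∑ p ∈ G, α p • D.u (f p) (f p) ∈ D.C :=
  Submodule.sum_mem _ fun p _ => Submodule.smul_mem _ _ (D.u_self_mem_C (f p))

lemma sum_smul_u_mem_N (hGS : ∀ p ∈ G, D.S p.1 p.2)
    (hG₁ : Set.InjOn Prod.fst (G : Set (Fin m × Fin m)))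
    (hG₂ : Set.InjOn Prod.snd (G : Set (Fin m × Fin m))) {γ : Fin m × Fin m → ℂ}
    (hγ : ∀ p ∈ G, ‖γ p‖ = 1) : ∑ p ∈ G, γ p • D.u p.1 p.2 ∈ D.N := by
  set w := ∑ p ∈ G, γ p • D.u p.1 p.2
  refine ⟨D.sum_smul_u_mem_A hGS γ, ?_, fun c hc => ?_⟩
  · have hww : wᴴ * w = ∑ l ∈ G.image Prod.snd, D.u l l := by
      rw [D.conjTranspose_sum_smul_u_mul_sum_smul_u hGS hG₁, Finset.sum_image hG₂]
      refine Finset.sum_congr rfl fun p hp => ?_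
      rw [RCLike.star_def, RCLike.conj_mul, hγ p hp]
      simp
    rw [hww]
    exact D.orthogonalIdempotents.isIdempotentElem_sum
  obtain ⟨x, rfl⟩ := (Submodule.mem_span_range_iff_exists_fun ℂ).mp hc
  have hwx : w * ∑ k, x k • D.u k k = ∑ p ∈ G, (γ p * x p.2) • D.u p.1 p.2 := by
    refine (Finset.sum_mul _ _ _).trans (Finset.sum_congr rfl fun p hp => ?_)
    rw [smul_mul_assoc, D.u_mul_sum_smul_u_self (hGS p hp), smul_smul]
  have hxw : (∑ k, x k • D.u k k) * w = ∑ p ∈ G, (x p.1 * γ p) • D.u p.1 p.2 := by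
    refine (Finset.mul_sum _ _ _).trans (Finset.sum_congr rfl fun p hp => ?_)
    rw [mul_smul_comm, D.sum_smul_u_self_mul_u (hGS p hp), smul_smul, mul_comm]
  constructor
  · rw [hwx, D.sum_smul_u_mul_conjTranspose_sum_smul_u hGS hG₂]
    exact D.sum_smul_u_self_mem_C Prod.fst _
  · rw [Matrix.mul_assoc, hxw, D.conjTranspose_sum_smul_u_mul_sum_smul_u hGS hG₁]
    exact D.sum_smul_u_self_mem_C Prod.snd _

lemma injOn_fst_of_isPartialMonomial (hv : v.IsPartialMonomial) (hGS : ∀ p ∈ G, D.S p.1 p.2)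
    (hG : ∀ p ∈ G, ∃ i j, D.u p.1 p.2 i j ≠ 0)
    (hGv : ∀ p ∈ G, ∀ i j, D.u p.1 p.2 i j ≠ 0 → v i j ≠ 0) :
    Set.InjOn Prod.fst (G : Set (Fin m × Fin m)) := by
  rintro ⟨k, l⟩ hp ⟨k', l'⟩ hq (rfl : k = k')
  obtain ⟨i, j, hu⟩ := hG _ hp
  have hS := hGS (k, l) hp
  obtain ⟨j', hu'⟩ := D.exists_u_apply_ne_zero_of_left (hGS _ hq)
    (D.u_self_apply_ne_zero_left hS hu)
  obtain rfl := hv.row i (hGv _ hp i j hu) (hGv _ hq i j' hu')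
  exact Prod.ext rfl (D.eq_of_u_apply_ne_zero hS (hGS _ hq) hu hu').2

lemma injOn_snd_of_isPartialMonomial (hv : v.IsPartialMonomial) (hGS : ∀ p ∈ G, D.S p.1 p.2)
    (hG : ∀ p ∈ G, ∃ i j, D.u p.1 p.2 i j ≠ 0)
    (hGv : ∀ p ∈ G, ∀ i j, D.u p.1 p.2 i j ≠ 0 → v i j ≠ 0) :
    Set.InjOn Prod.snd (G : Set (Fin m × Fin m)) := by
  rintro ⟨k, l⟩ hp ⟨k', l'⟩ hq (rfl : l = l')
  obtain ⟨i, j, hu⟩ := hG _ hp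
  have hS := hGS (k, l) hp
  obtain ⟨i', hu'⟩ := D.exists_u_apply_ne_zero_of_right (hGS _ hq)
    (D.u_self_apply_ne_zero_right hS hu)
  obtain rfl := hv.col j (hGv _ hp i j hu) (hGv _ hq i' j hu')
  exact Prod.ext (D.eq_of_u_apply_ne_zero hS (hGS _ hq) hu hu').1 rfl

lemma exists_mem_N_apply_near {b : Matrix (Fin n) (Fin n) ℂ} (hv : v.IsPartialMonomial)
    (hv₁ : ∀ i j, v i j ≠ 0 → ‖v i j‖ = 1) (hb : b ∈ D.A) {ε : ℝ} (hε : ε ≤ 1 / 4)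
    (hvb : ∀ i j, ‖v i j - b i j‖ < ε) :
    ∃ w ∈ D.N, (∀ i j, v i j = 0 → w i j = 0) ∧ ∀ i j, v i j ≠ 0 → ‖b i j - w i j‖ < ε := by
  classical
  choose d hd using fun p : Fin m × Fin m => D.exists_u_self_mul_mul_u_self_eq_smul hb p.1 p.2
  have hnorm_b {p : Fin m × Fin m} (hS : D.S p.1 p.2) {i j : Fin n}
      (h : D.u p.1 p.2 i j ≠ 0) : ‖b i j‖ = ‖d p‖ :=
    D.norm_apply_of_eq_smul hS (hd p) h
  have hb_large {i j : Fin n} (h : v i j ≠ 0) : 1 - ε < ‖b i j‖ := by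
    linarith [hvb i j, norm_sub_norm_le (v i j) (b i j), hv₁ i j h]
  have hb_small {i j : Fin n} (h : v i j = 0) : ‖b i j‖ < 1 - ε := by
    have := hvb i j
    rw [h, zero_sub, norm_neg] at this
    linarith
  set G := Finset.univ.filter fun p : Fin m × Fin m =>
    D.S p.1 p.2 ∧ ∃ i j, v i j ≠ 0 ∧ D.u p.1 p.2 i j ≠ 0
  have hGS : ∀ p ∈ G, D.S p.1 p.2 := fun p hp => (Finset.mem_filter.mp hp).2.1
  have hG : ∀ p ∈ G, ∃ i j, D.u p.1 p.2 i j ≠ 0 := fun p hp => by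
    obtain ⟨-, i, j, -, hu⟩ := (Finset.mem_filter.mp hp).2
    exact ⟨i, j, hu⟩
  have hGd : ∀ p ∈ G, 1 - ε < ‖d p‖ := fun p hp => by
    obtain ⟨hS, i, j, hvij, hu⟩ := (Finset.mem_filter.mp hp).2
    exact hnorm_b hS hu ▸ hb_large hvij
  have hGv : ∀ p ∈ G, ∀ i j, D.u p.1 p.2 i j ≠ 0 → v i j ≠ 0 := fun p hp i j hu hvij =>
    (hb_small hvij).not_gt (hnorm_b (hGS p hp) hu ▸ hGd p hp)
  have hd_ne : ∀ p ∈ G, d p ≠ 0 := fun p hp =>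
    norm_pos_iff.mp (lt_trans (by linarith) (hGd p hp))
  refine ⟨∑ p ∈ G, ((‖d p‖⁻¹ : ℂ) • d p) • D.u p.1 p.2,
    D.sum_smul_u_mem_N hGS (D.injOn_fst_of_isPartialMonomial hv hGS hG hGv)
      (D.injOn_snd_of_isPartialMonomial hv hGS hG hGv) fun p hp => norm_smul_inv_norm (hd_ne p hp),
    fun i j hvij => ?_, fun i j hvij => ?_⟩
  · refine (Matrix.sum_apply _ _ _ _).trans (Finset.sum_eq_zero fun p hp => ?_)
    rw [Matrix.smul_apply, show D.u p.1 p.2 i j = 0 from by_contra fun h => hGv p hp i j h hvij,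
      smul_zero]
  · obtain ⟨k, l, hS, hu⟩ := D.exists_u_apply_ne_zero hb fun h => by
      linarith [hb_large hvij, norm_eq_zero.mpr h]
    have hp : (k, l) ∈ G := Finset.mem_filter.mpr ⟨Finset.mem_univ _, hS, i, j, hvij, hu⟩
    calc ‖b i j - (∑ p ∈ G, ((‖d p‖⁻¹ : ℂ) • d p) • D.u p.1 p.2) i j‖
        = ‖d (k, l) - (‖d (k, l)‖⁻¹ : ℂ) • d (k, l)‖ := by
          rw [D.sum_smul_u_apply hGS _ hp hu, D.apply_eq_mul_u_apply hS (hd (k, l)) hu, ← sub_mul,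
            norm_mul, D.norm_u_apply hS hu, mul_one]
      _ = |‖d (k, l)‖ - 1| := norm_sub_inv_norm_smul_self (hd_ne _ hp)
      _ = |‖b i j‖ - ‖v i j‖| := by rw [hnorm_b (p := (k, l)) hS hu, hv₁ i j hvij]
      _ ≤ ‖b i j - v i j‖ := abs_norm_sub_norm_le _ _
      _ < ε := norm_sub_rev (v i j) (b i j) ▸ hvb i j

lemma exists_mem_N_near {b : Matrix (Fin n) (Fin n) ℂ} (hv : v.IsPartialMonomial)
    (hv₁ : ∀ i j, v i j ≠ 0 → ‖v i j‖ = 1) (hb : b ∈ D.A) {ε : ℝ} (hε : ε ≤ 1 / 4)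
    (hvb : ‖v - b‖ < ε) : ∃ w ∈ D.N, ‖v - w‖ ≤ 2 * ε := by
  have hvb' (i j : Fin n) : ‖v i j - b i j‖ < ε :=
    (norm_apply_le_l2_opNorm (v - b) i j).trans_lt hvb
  obtain ⟨w, hw, hw₀, hbw⟩ := D.exists_mem_N_apply_near hv hv₁ hb hε hvb'
  have hε₀ : 0 ≤ ε := (norm_nonneg _).trans hvb.le
  refine ⟨w, hw, (hv.mono fun i j h hvij => h ?_).l2_opNorm_le (by positivity) fun i j => ?_⟩
  · rw [Matrix.sub_apply, hvij, hw₀ i j hvij, sub_zero]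
  by_cases hvij : v i j = 0
  · simp [hvij, hw₀ i j hvij, hε₀]
  · calc ‖(v - w) i j‖ ≤ ‖v i j - b i j‖ + ‖b i j - w i j‖ :=
          norm_sub_le_norm_sub_add_norm_sub _ _ _
      _ ≤ 2 * ε := by linarith [hvb' i j, hbw i j hvij]

end DigraphSubalgebra

/-- Given `δ > 0` there exists `ε > 0` such that: for every
`n` and all digraph subalgebras `(A₁, C₁)`, `(A₂, C₂)` of `(Mₙ(ℂ), Dₙ)`, if
`A₁ ⊆_ε A₂` then `N_{C₁}(A₁) ⊆_δ N_{C₂}(A₂)`. -/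
theorem stmt_13 (δ : ℝ) (hδ : 0 < δ) :
    ∃ ε : ℝ, 0 < ε ∧
      ∀ (n m₁ m₂ : ℕ), 1 ≤ m₁ → 1 ≤ m₂ →
        ∀ (D₁ : DigraphSubalgebra n m₁) (D₂ : DigraphSubalgebra n m₂),
          (∀ a ∈ D₁.A, ‖a‖ ≤ 1 → ∃ b ∈ D₂.A, ‖a - b‖ < ε) →
          ∀ v ∈ D₁.N, ∃ w ∈ D₂.N, ‖v - w‖ < δ := by
  refine ⟨min δ 1 / 4, by positivity, fun n m₁ m₂ _ _ D₁ D₂ hA v hv => ?_⟩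
  obtain ⟨b, hb, hvb⟩ := hA v hv.1 (D₁.norm_le_one_of_mem_N hv)
  obtain ⟨w, hw, hvw⟩ := D₂.exists_mem_N_near (D₁.isPartialMonomial_of_mem_N hv)
    (fun _ _ => D₁.norm_apply_of_mem_N hv) hb (by linarith [min_le_right δ 1]) hvb
  exact ⟨w, hw, by linarith [min_le_left δ 1]⟩
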